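/- Let P : M_{dA}(ℂ) → M_{dB}(ℂ) be decomposable and let L : M_{dA}(ℂ) ⊗ M_{dB}(ℂ) → M_{dA'}(ℂ) ⊗ M_{dB'}(ℂ) be a PPT-preserving completely positive map. Then the linear map Q : M_{dA'}(ℂ) → M_{dB'}(ℂ) whose Choi matrix is C_Q = L(C_P) is decomposable. -/

import Mathlib

open scoped ComplexOrder Kronecker Matrix

namespace TensorDecomp

/-- The Choi matrix of a linear map between matrix algebras. -/
noncomputable def choi {A B : Type} [Fintype A] [DecidableEq A]
    (L : Matrix A A ℂ →ₗ[ℂ] Matrix B B ℂ) : Matrix (A × B) (A × B) ℂ :=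
  fun p q => L (Matrix.single p.1 q.1 1) p.2 q.2

/-- A map is positive if it maps positive semidefinite matrices to positive
semidefinite matrices. -/
def IsPositiveMap {A B : Type} [Fintype A] [Fintype B]
    (L : Matrix A A ℂ →ₗ[ℂ] Matrix B B ℂ) : Prop :=
  ∀ X : Matrix A A ℂ, X.PosSemidef → (L X).PosSemidef

/-- A map is completely positive iff its Choi matrix is positive semidefinite. -/
def IsCompletelyPositive {A B : Type} [Fintype A] [DecidableEq A] [Fintype B]
    (L : Matrix A A ℂ →ₗ[ℂ] Matrix B B ℂ) : Prop :=
  (choi L).PosSemidef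

/-- Matrix transposition as a linear map. -/
def transposeMap (A : Type) : Matrix A A ℂ →ₗ[ℂ] Matrix A A ℂ where
  toFun X := X.transpose
  map_add' X Y := Matrix.transpose_add X Y
  map_smul' c X := Matrix.transpose_smul c X

/-- A map is completely copositive iff transposition composed with it is
completely positive. -/
def IsCompletelyCopositive {A B : Type} [Fintype A] [DecidableEq A] [Fintype B]
    (L : Matrix A A ℂ →ₗ[ℂ] Matrix B B ℂ) : Prop :=
  IsCompletelyPositive (transposeMap B ∘ₗ L)

/-- A map is decomposable iff it is the sum of a completely positive map and the
transposition composed with a completely positive map. -/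
def IsDecomposable {A B : Type} [Fintype A] [DecidableEq A] [Fintype B]
    (L : Matrix A A ℂ →ₗ[ℂ] Matrix B B ℂ) : Prop :=
  ∃ T₁ T₂ : Matrix A A ℂ →ₗ[ℂ] Matrix B B ℂ,
    IsCompletelyPositive T₁ ∧ IsCompletelyPositive T₂ ∧ L = T₁ + transposeMap B ∘ₗ T₂

/-- The tensor product of a finite family of linear maps between matrix algebras,
characterized by `(⊗ₜ L t) (⊗ₜ X t) = ⊗ₜ (L t (X t))`. -/
noncomputable def mapTensorFamily {ι : Type} [Fintype ι] [DecidableEq ι]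
    {κ κ' : Type} [Fintype κ] [DecidableEq κ]
    (L : ι → (Matrix κ κ ℂ →ₗ[ℂ] Matrix κ' κ' ℂ)) :
    Matrix (ι → κ) (ι → κ) ℂ →ₗ[ℂ] Matrix (ι → κ') (ι → κ') ℂ where
  toFun X := fun k l => ∑ i : ι → κ, ∑ j : ι → κ,
    X i j * ∏ t, L t (Matrix.single (i t) (j t) 1) (k t) (l t)
  map_add' X Y := by
    funext k l
    show _ = (_ : ℂ) + _
    simp [Matrix.add_apply, add_mul, Finset.sum_add_distrib]
  map_smul' c X := by
    funext k l
    show _ = c * (_ : ℂ)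
    simp [Matrix.smul_apply, smul_eq_mul, Finset.mul_sum, mul_assoc]

/-- The `n`-th tensor power of a linear map between matrix algebras. -/
noncomputable def mapTensorPow {κ κ' : Type} [Fintype κ] [DecidableEq κ]
    (L : Matrix κ κ ℂ →ₗ[ℂ] Matrix κ' κ' ℂ) (n : ℕ) :
    Matrix (Fin n → κ) (Fin n → κ) ℂ →ₗ[ℂ] Matrix (Fin n → κ') (Fin n → κ') ℂ :=
  mapTensorFamily (fun _ : Fin n => L)

/-- The tensor product of two linear maps between matrix algebras, characterized by
`(L₁ ⊗ L₂)(X ⊗ Y) = L₁(X) ⊗ L₂(Y)`. -/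
noncomputable def mapTensor {A B C D : Type} [Fintype A] [DecidableEq A]
    [Fintype C] [DecidableEq C]
    (L₁ : Matrix A A ℂ →ₗ[ℂ] Matrix B B ℂ) (L₂ : Matrix C C ℂ →ₗ[ℂ] Matrix D D ℂ) :
    Matrix (A × C) (A × C) ℂ →ₗ[ℂ] Matrix (B × D) (B × D) ℂ where
  toFun X := fun k l => ∑ i : A × C, ∑ j : A × C,
    X i j * (L₁ (Matrix.single i.1 j.1 1) k.1 l.1 *
      L₂ (Matrix.single i.2 j.2 1) k.2 l.2)
  map_add' X Y := by
    funext k l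
    show _ = (_ : ℂ) + _
    simp [Matrix.add_apply, add_mul, Finset.sum_add_distrib]
  map_smul' c X := by
    funext k l
    show _ = c * (_ : ℂ)
    simp [Matrix.smul_apply, smul_eq_mul, Finset.mul_sum, mul_assoc]

/-- The adjoint of a linear map between matrix algebras with respect to the
Hilbert-Schmidt inner product `⟨A, B⟩ = Tr[Aᴴ B]`. -/
noncomputable def hsAdjoint {A B : Type} [Fintype A] [DecidableEq A] [Fintype B]
    (T : Matrix A A ℂ →ₗ[ℂ] Matrix B B ℂ) : Matrix B B ℂ →ₗ[ℂ] Matrix A A ℂ where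
  toFun Y := fun i j => ((T (Matrix.single i j 1))ᴴ * Y).trace
  map_add' X Y := by
    funext i j
    show _ = (_ : ℂ) + _
    simp [Matrix.mul_add, Matrix.add_apply]
  map_smul' c X := by
    funext i j
    show _ = c * (_ : ℂ)
    simp [Matrix.mul_smul, Matrix.smul_apply]

/-- The quantity `μ(P)` from Definition 2 of the paper. -/
noncomputable def mu {A B : Type} [Fintype A] [DecidableEq A] [Fintype B] [DecidableEq B]
    (P : Matrix A A ℂ →ₗ[ℂ] Matrix B B ℂ) : ℝ :=
  sInf { r : ℝ | ∃ T : Matrix A A ℂ →ₗ[ℂ] Matrix B B ℂ,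
    IsCompletelyPositive T ∧ hsAdjoint T (P 1) ≠ 0 ∧
    r = ((choi P * choi T).trace).re / ((hsAdjoint T (P 1)).trace).re }

/-- The unique linear map with the given Choi matrix. -/
noncomputable def ofChoi {A B : Type} [Fintype A] [Fintype B]
    (C : Matrix (A × B) (A × B) ℂ) : Matrix A A ℂ →ₗ[ℂ] Matrix B B ℂ where
  toFun X := fun k l => ∑ i : A, ∑ j : A, X i j * C (i, k) (j, l)
  map_add' X Y := by
    funext k l
    show _ = (_ : ℂ) + _
    simp [Matrix.add_apply, add_mul, Finset.sum_add_distrib]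
  map_smul' c X := by
    funext k l
    show _ = c * (_ : ℂ)
    simp [Matrix.smul_apply, smul_eq_mul, Finset.mul_sum, mul_assoc]

/-- The flip operator on `ℂ^d ⊗ ℂ^d`. -/
def flipOp (d : ℕ) : Matrix (Fin d × Fin d) (Fin d × Fin d) ℂ :=
  fun p q => if p.1 = q.2 ∧ p.2 = q.1 then 1 else 0

/-- The projection onto the symmetric subspace of `ℂ^d ⊗ ℂ^d`. -/
noncomputable def Psym (d : ℕ) : Matrix (Fin d × Fin d) (Fin d × Fin d) ℂ :=
  (1 / 2 : ℂ) • (1 + flipOp d)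

/-- The projection onto the antisymmetric subspace of `ℂ^d ⊗ ℂ^d`. -/
noncomputable def Pasym (d : ℕ) : Matrix (Fin d × Fin d) (Fin d × Fin d) ℂ :=
  (1 / 2 : ℂ) • (1 - flipOp d)

/-- The (unnormalized to trace one) Werner state with parameter `p`. -/
noncomputable def wernerState (d : ℕ) (p : ℝ) :
    Matrix (Fin d × Fin d) (Fin d × Fin d) ℂ :=
  ((p : ℂ) / ((d : ℂ) * ((d : ℂ) + 1) / 2)) • Psym d +
    (((1 - p : ℝ) : ℂ) / ((d : ℂ) * ((d : ℂ) - 1) / 2)) • Pasym d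

/-- The Werner map `W_p`, i.e. the unique linear map whose Choi matrix is the
Werner state `ρ_W(p)`. -/
noncomputable def wernerMap (d : ℕ) (p : ℝ) :
    Matrix (Fin d) (Fin d) ℂ →ₗ[ℂ] Matrix (Fin d) (Fin d) ℂ :=
  ofChoi (wernerState d p)

/-- Partial transposition (on the second tensor factor) of a bipartite matrix. -/
def ptranspose {A B : Type} (X : Matrix (A × B) (A × B) ℂ) :
    Matrix (A × B) (A × B) ℂ :=
  fun p q => X (p.1, q.2) (q.1, p.2)

/-- Partial transposition of all `B`-systems of a multipartite matrix whose
subsystems each consist of an `A`-part (first factor) and a `B`-part (second factor). -/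
def ptransposeAll {ι A B : Type} (X : Matrix (ι → A × B) (ι → A × B) ℂ) :
    Matrix (ι → A × B) (ι → A × B) ℂ :=
  fun p q => X (fun t => ((p t).1, (q t).2)) (fun t => ((q t).1, (p t).2))

/-- The tensor product of a finite family of matrices. -/
def tensorFamily {ι : Type} [Fintype ι] {κ : Type} (M : ι → Matrix κ κ ℂ) :
    Matrix (ι → κ) (ι → κ) ℂ :=
  fun p q => ∏ t, M t (p t) (q t)

/-- The normalized projections `P₀ = P_sym / d_sym` and `P₁ = P_asym / d_asym`. -/
noncomputable def Pnorm (d : ℕ) : Fin 2 → Matrix (Fin d × Fin d) (Fin d × Fin d) ℂ :=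
  ![((d : ℂ) * ((d : ℂ) + 1) / 2)⁻¹ • Psym d, ((d : ℂ) * ((d : ℂ) - 1) / 2)⁻¹ • Pasym d]

/-- The matrices `F(k,l)` from equation (10) of the paper (with `k, l` 0-based). -/
noncomputable def Fmat (d n m : ℕ) (k : Fin (n + 1)) (l : Fin (m + 1)) :
    Matrix ((Fin n ⊕ Fin m) → Fin d × Fin d) ((Fin n ⊕ Fin m) → Fin d × Fin d) ℂ :=
  ((Nat.factorial n * Nat.factorial m : ℂ))⁻¹ • ∑ f : (Fin n ⊕ Fin m) → Fin 2,
    if (∑ t : Fin n, ((f (Sum.inl t)) : ℕ)) = (k : ℕ) ∧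
        (∑ s : Fin m, ((f (Sum.inr s)) : ℕ)) = (l : ℕ) then
      tensorFamily (fun t => match t with
        | Sum.inl _ => Pnorm d (f t)
        | Sum.inr _ => ptranspose (Pnorm d (f t)))
    else 0

/-- The matrix `H_Q` from equation (9) of the paper (with indices 0-based). -/
noncomputable def HQ (d n m : ℕ) (Q : Matrix (Fin (n + 1)) (Fin (m + 1)) ℝ) :
    Matrix ((Fin n ⊕ Fin m) → Fin d × Fin d) ((Fin n ⊕ Fin m) → Fin d × Fin d) ℂ :=
  ∑ k : Fin (n + 1), ∑ l : Fin (m + 1), (Q k l : ℂ) • Fmat d n m k l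

/-- The matrix `V^m_d` from equation (8) of the paper (with indices 0-based). -/
noncomputable def Vmat (m d : ℕ) : Matrix (Fin (m + 1)) (Fin (m + 1)) ℝ :=
  fun a b => (-1 : ℝ) ^ (a : ℕ) *
    ∑ t ∈ Finset.Icc ((a : ℕ) + (b : ℕ) - m) (min (a : ℕ) (b : ℕ)),
      ((a : ℕ).choose t : ℝ) * ((m - (a : ℕ)).choose ((b : ℕ) - t) : ℝ) *
        (-(((d : ℝ) + 1) / ((d : ℝ) - 1))) ^ t

/-- The vector `v^n_p` from equation (12) of the paper (with index 0-based). -/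
noncomputable def vvec (d n : ℕ) (p : ℝ) : Fin (n + 1) → ℝ :=
  fun k => (((d : ℝ) + 1) / ((d : ℝ) - 1)) ^ (k : ℕ) * (1 - p) ^ (k : ℕ) * p ^ (n - (k : ℕ))

/-- The mixed tensor power `W_{p₁}^{⊗n} ⊗ (ϑ ∘ W_{p₂})^{⊗m}` of Werner maps. -/
noncomputable def wernerMixed (d n m : ℕ) (p₁ p₂ : ℝ) :
    Matrix ((Fin n ⊕ Fin m) → Fin d) ((Fin n ⊕ Fin m) → Fin d) ℂ →ₗ[ℂ]
      Matrix ((Fin n ⊕ Fin m) → Fin d) ((Fin n ⊕ Fin m) → Fin d) ℂ :=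
  mapTensorFamily (fun t => match t with
    | Sum.inl _ => wernerMap d p₁
    | Sum.inr _ => transposeMap (Fin d) ∘ₗ wernerMap d p₂)


lemma choi_apply' {A B : Type} [Fintype A] [DecidableEq A] [Fintype B]
    (Q : Matrix A A ℂ →ₗ[ℂ] Matrix B B ℂ) (X : Matrix A A ℂ) (k l : B) :
    Q X k l = ∑ i : A, ∑ j : A, X i j * choi Q (i, k) (j, l) := by
  conv_lhs => rw [Matrix.matrix_eq_sum_single X]
  rw [map_sum]
  simp only [map_sum, Matrix.sum_apply]
  refine Finset.sum_congr rfl fun i _ => Finset.sum_congr rfl fun j _ => ?_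
  have : Matrix.single i j (X i j) = X i j • Matrix.single i j 1 := by
    rw [Matrix.smul_single, smul_eq_mul, mul_one]
  rw [this, map_smul, Matrix.smul_apply, smul_eq_mul, choi]

lemma ofChoi_choi {A B : Type} [Fintype A] [DecidableEq A] [Fintype B]
    (Q : Matrix A A ℂ →ₗ[ℂ] Matrix B B ℂ) : ofChoi (choi Q) = Q := by
  refine LinearMap.ext fun X => ?_
  funext k l
  conv_rhs => rw [choi_apply' Q X k l]
  rfl

lemma choi_ofChoi {A B : Type} [Fintype A] [DecidableEq A] [Fintype B]
    (C : Matrix (A × B) (A × B) ℂ) : choi (ofChoi C) = C := by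
  funext p q
  show ∑ i : A, ∑ j : A, Matrix.single p.1 q.1 1 i j * C (i, p.2) (j, q.2) = C p q
  simp [Matrix.single, ite_and, Finset.sum_ite_eq, Finset.sum_ite_eq']

lemma cp_isPositiveMap {A B : Type} [Fintype A] [DecidableEq A] [Fintype B]
    (L : Matrix A A ℂ →ₗ[ℂ] Matrix B B ℂ) (h : IsCompletelyPositive L) :
    IsPositiveMap L := by
  intro X hX
  open scoped MatrixOrder Matrix.Norms.L2Operator in
  obtain ⟨M, hM⟩ := CStarAlgebra.nonneg_iff_eq_star_mul_self.mp hX.nonneg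
  rw [Matrix.star_eq_conjTranspose] at hM
  subst hM
  refine Matrix.PosSemidef.of_dotProduct_mulVec_nonneg ?_ ?_
  · refine Matrix.IsHermitian.ext fun k l => ?_
    rw [choi_apply' L (Mᴴ * M) l k, choi_apply' L (Mᴴ * M) k l]
    rw [star_sum]
    rw [Finset.sum_comm]
    refine Finset.sum_congr rfl fun i _ => ?_
    rw [star_sum]
    refine Finset.sum_congr rfl fun j _ => ?_
    rw [star_mul', hX.1.apply, h.1.apply]
  · intro y
    set z : A → (A × B) → ℂ := fun a p => M a p.1 * y p.2 with hz
    have lhs_eq : dotProduct (star y) ((L (Mᴴ * M)) *ᵥ y) =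
        ∑ k : B, ∑ l : B, ∑ i : A, ∑ j : A, ∑ a : A,
          star (y k) * star (M a i) * (M a j * (choi L (i, k) (j, l) * y l)) := by
      simp only [dotProduct, Matrix.mulVec, Pi.star_apply]
      have : ∀ k l, L (Mᴴ * M) k l =
          ∑ i : A, ∑ j : A, (Mᴴ * M) i j * choi L (i, k) (j, l) :=
        fun k l => choi_apply' L _ k l
      simp only [this, Matrix.mul_apply, Matrix.conjTranspose_apply]
      simp only [Finset.sum_mul, Finset.mul_sum]
      refine Finset.sum_congr rfl fun k _ => Finset.sum_congr rfl fun l _ =>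
        Finset.sum_congr rfl fun i _ => Finset.sum_congr rfl fun j _ =>
        Finset.sum_congr rfl fun a _ => by ring
    have rhs_eq : (∑ a : A, dotProduct (star (z a)) ((choi L) *ᵥ (z a))) =
        ∑ a : A, ∑ i : A, ∑ k : B, ∑ j : A, ∑ l : B,
          star (M a i * y k) * (choi L (i, k) (j, l) * (M a j * y l)) := by
      simp only [dotProduct, Matrix.mulVec, Pi.star_apply, hz,
        Fintype.sum_prod_type, Finset.mul_sum]
    have key : dotProduct (star y) ((L (Mᴴ * M)) *ᵥ y) =
        ∑ a : A, dotProduct (star (z a)) ((choi L) *ᵥ (z a)) := by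
      rw [lhs_eq, rhs_eq]
      rw [show (∑ k : B, ∑ l : B, ∑ i : A, ∑ j : A, ∑ a : A,
          star (y k) * star (M a i) * (M a j * (choi L (i, k) (j, l) * y l))) =
          ∑ x : B × B × A × A × A,
            star (y x.1) * star (M x.2.2.2.2 x.2.2.1) * (M x.2.2.2.2 x.2.2.2.1 *
              (choi L (x.2.2.1, x.1) (x.2.2.2.1, x.2.1) * y x.2.1)) from by
        simp only [Fintype.sum_prod_type]]
      rw [show (∑ a : A, ∑ i : A, ∑ k : B, ∑ j : A, ∑ l : B,
          star (M a i * y k) * (choi L (i, k) (j, l) * (M a j * y l))) =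
          ∑ x : A × A × B × A × B,
            star (M x.1 x.2.1 * y x.2.2.1) * (choi L (x.2.1, x.2.2.1) (x.2.2.2.1, x.2.2.2.2) *
              (M x.1 x.2.2.2.1 * y x.2.2.2.2)) from by
        simp only [Fintype.sum_prod_type]]
      refine Fintype.sum_equiv ⟨fun x => (x.2.2.2.2, x.2.2.1, x.1, x.2.2.2.1, x.2.1),
        fun x => (x.2.2.1, x.2.2.2.2, x.2.1, x.2.2.2.1, x.1), fun x => rfl, fun x => rfl⟩
        _ _ (fun x => ?_)
      simp only [Equiv.coe_fn_mk, star_mul']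
      ring
    rw [key]
    exact Finset.sum_nonneg fun a _ => h.dotProduct_mulVec_nonneg (z a)

lemma choi_add {A B : Type} [Fintype A] [DecidableEq A] [Fintype B]
    (T S : Matrix A A ℂ →ₗ[ℂ] Matrix B B ℂ) :
    choi (T + S) = choi T + choi S := rfl

lemma choi_comp_transpose {A B : Type} [Fintype A] [DecidableEq A] [Fintype B]
    (T : Matrix A A ℂ →ₗ[ℂ] Matrix B B ℂ) :
    choi (transposeMap B ∘ₗ T) = ptranspose (choi T) := rfl

lemma ptranspose_ptranspose {A B : Type} (X : Matrix (A × B) (A × B) ℂ) :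
    ptranspose (ptranspose X) = X := rfl

theorem stmt16 (dA dB dA' dB' : ℕ)
    (P : Matrix (Fin dA) (Fin dA) ℂ →ₗ[ℂ] Matrix (Fin dB) (Fin dB) ℂ)
    (hP : IsDecomposable P)
    (L : Matrix (Fin dA × Fin dB) (Fin dA × Fin dB) ℂ →ₗ[ℂ]
      Matrix (Fin dA' × Fin dB') (Fin dA' × Fin dB') ℂ)
    (hL : IsCompletelyPositive L)
    (hppt : ∀ X : Matrix (Fin dA × Fin dB) (Fin dA × Fin dB) ℂ, X.PosSemidef →
      (ptranspose (L (ptranspose X))).PosSemidef)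
    (Q : Matrix (Fin dA') (Fin dA') ℂ →ₗ[ℂ] Matrix (Fin dB') (Fin dB') ℂ)
    (hQ : choi Q = L (choi P)) :
    IsDecomposable Q := by
  obtain ⟨T₁, T₂, h1, h2, hPdec⟩ := hP
  refine ⟨ofChoi (L (choi T₁)), ofChoi (ptranspose (L (ptranspose (choi T₂)))), ?_, ?_, ?_⟩
  · show (choi (ofChoi (L (choi T₁)))).PosSemidef
    rw [choi_ofChoi]
    exact cp_isPositiveMap L hL (choi T₁) h1
  · show (choi (ofChoi (ptranspose (L (ptranspose (choi T₂)))))).PosSemidef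
    rw [choi_ofChoi]
    exact hppt (choi T₂) h2
  · have hc : choi Q = choi (ofChoi (L (choi T₁)) +
        transposeMap (Fin dB') ∘ₗ ofChoi (ptranspose (L (ptranspose (choi T₂))))) := by
      rw [choi_add, choi_comp_transpose, choi_ofChoi, choi_ofChoi,
        ptranspose_ptranspose, hQ, hPdec, choi_add, choi_comp_transpose, map_add]
    have := congrArg ofChoi hc
    rwa [ofChoi_choi, ofChoi_choi] at this

end TensorDecomp
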